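/- arXiv:patt-sol/9701011 — 6 statements merged into one kernel-verified Lean document; each statement's English description precedes it below -/
import Mathlib

section
/- The function $R_0(z) = \left(\frac{4\omega}{1+\sqrt{1-\beta}\,\cosh(2\sqrt{\omega}\,z)}\right)^{1/2}$ is twice differentiable on $\mathbb{R}$ and satisfies the ordinary differential equation $R_0''(z) - \omega R_0(z) + R_0(z)^3 + \alpha R_0(z)^5 = 0$ for all $z \in \mathbb{R}$. -/
/-!
Write `R₀ = √(4ω) · v` with `v = (1 + b cosh (c z))^(-1/2)`, `b = √(1 - β)`, `c = 2√ω`.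
Differentiating twice and eliminating `sinh² = cosh² - 1` and `b cosh (c z) = v⁻² - 1` turns `v''`
into the odd polynomial `(c²/4) v - c² v³ + (3/4) c² (1 - b²) v⁵` in `v`; with `c² = 4ω` and
`1 - b² = β = -16αω/3` this is the stated equation for `R₀`.
-/

open Real

theorem HasDerivAt.inv_sqrt {f : ℝ → ℝ} {f' x : ℝ} (hf : HasDerivAt f f' x) (hx : 0 < f x) :
    HasDerivAt (fun y => (√(f y))⁻¹) (-(f' / 2) * (√(f x))⁻¹ ^ 3) x := by
  have hsqrt : 0 < √(f x) := sqrt_pos.2 hx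
  refine ((hf.sqrt hx.ne').inv hsqrt.ne').congr_deriv ?_
  field_simp

noncomputable def invSqrtOnePlusCosh (b c z : ℝ) : ℝ := (√(1 + b * cosh (c * z)))⁻¹

section InvSqrtOnePlusCosh

variable {b : ℝ} (c : ℝ)

theorem one_add_mul_cosh_pos (hb : 0 ≤ b) (x : ℝ) : 0 < 1 + b * cosh x := by
  nlinarith [one_le_cosh x]

theorem invSqrtOnePlusCosh_sq_mul (hb : 0 ≤ b) (z : ℝ) :
    invSqrtOnePlusCosh b c z ^ 2 * (1 + b * cosh (c * z)) = 1 := by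
  have hpos := one_add_mul_cosh_pos hb (c * z)
  rw [invSqrtOnePlusCosh, inv_pow, sq_sqrt hpos.le, inv_mul_cancel₀ hpos.ne']

theorem hasDerivAt_invSqrtOnePlusCosh (hb : 0 ≤ b) (z : ℝ) :
    HasDerivAt (invSqrtOnePlusCosh b c)
      (-(b * c / 2) * sinh (c * z) * invSqrtOnePlusCosh b c z ^ 3) z := by
  have hcosh : HasDerivAt (fun z => 1 + b * cosh (c * z)) (b * (sinh (c * z) * c)) z := by
    simpa using (((hasDerivAt_id z).const_mul c).cosh.const_mul b).const_add 1
  refine (hcosh.inv_sqrt (one_add_mul_cosh_pos hb (c * z))).congr_deriv ?_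
  rw [invSqrtOnePlusCosh]
  ring

theorem deriv_invSqrtOnePlusCosh (hb : 0 ≤ b) :
    deriv (invSqrtOnePlusCosh b c) =
      fun z => -(b * c / 2) * sinh (c * z) * invSqrtOnePlusCosh b c z ^ 3 :=
  funext fun z => (hasDerivAt_invSqrtOnePlusCosh c hb z).deriv

theorem hasDerivAt_deriv_invSqrtOnePlusCosh (hb : 0 ≤ b) (z : ℝ) :
    HasDerivAt (deriv (invSqrtOnePlusCosh b c))
      (c ^ 2 / 4 * invSqrtOnePlusCosh b c z - c ^ 2 * invSqrtOnePlusCosh b c z ^ 3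
        + 3 / 4 * c ^ 2 * (1 - b ^ 2) * invSqrtOnePlusCosh b c z ^ 5) z := by
  rw [deriv_invSqrtOnePlusCosh c hb]
  have hsinh : HasDerivAt (fun z => -(b * c / 2) * sinh (c * z))
      (-(b * c / 2) * (cosh (c * z) * c)) z := by
    simpa using ((hasDerivAt_id z).const_mul c).sinh.const_mul (-(b * c / 2))
  refine (hsinh.mul ((hasDerivAt_invSqrtOnePlusCosh c hb z).pow 3)).congr_deriv ?_
  simp only [Pi.pow_apply]
  set v := invSqrtOnePlusCosh b c z
  linear_combination 3 / 4 * b ^ 2 * c ^ 2 * v ^ 5 * sinh_sq (c * z)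
    + c ^ 2 * v * (3 / 4 * (v ^ 2 * (1 + b * cosh (c * z)) + 1 - 2 * v ^ 2) - 1 / 2)
      * invSqrtOnePlusCosh_sq_mul c hb z

end InvSqrtOnePlusCosh

theorem stmt0_general (ω α β : ℝ) (hω : 0 < ω) (hβ : β = -(16 / 3) * α * ω)
    (hβ1 : β < 1)
    (R0 : ℝ → ℝ)
    (hR0 : ∀ z : ℝ, R0 z =
      Real.sqrt (4 * ω / (1 + Real.sqrt (1 - β) * Real.cosh (2 * Real.sqrt ω * z)))) :
    (Differentiable ℝ R0 ∧ Differentiable ℝ (deriv R0)) ∧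
    ∀ z : ℝ, deriv (deriv R0) z - ω * R0 z + (R0 z) ^ 3 + α * (R0 z) ^ 5 = 0 := by
  set s := √(4 * ω)
  set b := √(1 - β)
  set c := 2 * √ω
  set v := invSqrtOnePlusCosh b c
  have hb : 0 ≤ b := sqrt_nonneg _
  have hR0v : R0 = fun z => s * v z := by
    funext z
    rw [hR0, sqrt_div' _ (one_add_mul_cosh_pos hb _).le, div_eq_mul_inv]
    rfl
  have hv' := hasDerivAt_invSqrtOnePlusCosh c hb
  have hv'' := hasDerivAt_deriv_invSqrtOnePlusCosh c hb
  have hderiv : deriv R0 = fun z => s * deriv v z := by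
    rw [hR0v, deriv_const_mul_field']
  refine ⟨⟨fun z => hR0v ▸ ((hv' z).const_mul s).differentiableAt,
    fun z => hderiv ▸ ((hv'' z).const_mul s).differentiableAt⟩, fun z => ?_⟩
  rw [hderiv, ((hv'' z).const_mul s).deriv, hR0v]
  have hs : s ^ 2 = 4 * ω := sq_sqrt (by positivity)
  have hc : c ^ 2 = 4 * ω := by rw [mul_pow, sq_sqrt hω.le]; ring
  have hb2 : b ^ 2 = 1 - β := sq_sqrt (by linarith)
  linear_combination s * v z / 4 * hc + s * v z ^ 3 * (hs - hc)
    + s * v z ^ 5 * (3 / 4 * (1 - b ^ 2) * hc - 3 * ω * hb2 + 3 * ω * hβ + α * (s ^ 2 + 4 * ω) * hs)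

/-- The function
`R₀(z) = (4ω / (1 + √(1-β) cosh(2√ω z)))^(1/2)` (with `β = -16αω/3`, `0 ≤ β < 1`,
`ω > 0`) is twice differentiable on `ℝ` and satisfies
`R₀'' - ω R₀ + R₀³ + α R₀⁵ = 0`. -/
theorem stmt0 (ω α β : ℝ) (hω : 0 < ω) (hβ : β = -(16 / 3) * α * ω)
    (hβ0 : 0 ≤ β) (hβ1 : β < 1)
    (R0 : ℝ → ℝ)
    (hR0 : ∀ z : ℝ, R0 z =
      Real.sqrt (4 * ω / (1 + Real.sqrt (1 - β) * Real.cosh (2 * Real.sqrt ω * z)))) :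
    (Differentiable ℝ R0 ∧ Differentiable ℝ (deriv R0)) ∧
    ∀ z : ℝ, deriv (deriv R0) z - ω * R0 z + (R0 z) ^ 3 + α * (R0 z) ^ 5 = 0 :=
  stmt0_general ω α β hω hβ hβ1 R0 hR0
end

section
/- The identity $\Lambda_2' = -\omega\Lambda_2 + \Lambda_4 + \alpha\Lambda_6$ holds, i.e. $\int_{-\infty}^{\infty} R_0'(s)^2\,ds = -\omega\int_{-\infty}^{\infty} R_0(s)^2\,ds + \int_{-\infty}^{\infty} R_0(s)^4\,ds + \alpha\int_{-\infty}^{\infty} R_0(s)^6\,ds$. -/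
open MeasureTheory

/-!
Write `R = √(a/D)` with `D = 1 + c cosh (k z)`. Its logarithmic derivative `h = R'/R = -D'/(2D)`
satisfies the Riccati equation `h' + h² = (k²/4) (1 - 4/D + 3 (1 - c²)/D²)`, so `R'' = (h' + h²) R`
and `1/D = R²/a` give the profile equation `R'' = (k²/4) (R - (4/a) R³ + 3 (1 - c²)/a² R⁵)`, which
for `a = k² = 4ω`, `c² = 1 - β` reads `R'' = ωR - R³ - αR⁵`. The functions `R'²`, `R²ⁿ` and
`R R' = h R²` are all bounded by multiples of `1/D`, which is integrable, so the derivative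
`R'² + R R''` of `R R'` has integral zero.
-/

open Real

noncomputable section

def solitonDenom (c k z : ℝ) : ℝ := 1 + c * cosh (k * z)

def solitonProfile (a c k z : ℝ) : ℝ := √(a / solitonDenom c k z)

def solitonLogDeriv (c k z : ℝ) : ℝ := -(c * k * sinh (k * z)) / (2 * solitonDenom c k z)

end

lemma one_add_sq_le_four_mul_cosh (y : ℝ) : 1 + y ^ 2 ≤ 4 * cosh y := by
  rw [← cosh_abs, cosh_eq]
  have hpos := quadratic_le_exp_of_nonneg (abs_nonneg y)
  have hneg := add_one_le_exp (-|y|)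
  nlinarith [sq_abs y, abs_nonneg y]

section

variable {a c k : ℝ}

lemma one_le_solitonDenom (hc : 0 ≤ c) (z : ℝ) : 1 ≤ solitonDenom c k z :=
  le_add_of_nonneg_right (mul_nonneg hc (one_pos.le.trans (one_le_cosh _)))

lemma solitonDenom_pos (hc : 0 ≤ c) (z : ℝ) : 0 < solitonDenom c k z :=
  one_pos.trans_le (one_le_solitonDenom hc z)

lemma continuous_solitonDenom (c k : ℝ) : Continuous (solitonDenom c k) := by
  unfold solitonDenom; fun_prop

lemma hasDerivAt_solitonDenom (c k z : ℝ) :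
    HasDerivAt (solitonDenom c k) (c * k * sinh (k * z)) z := by
  have := (((hasDerivAt_id z).const_mul k).cosh.const_mul c).const_add 1
  exact this.congr_deriv (by simp only [id, mul_one]; ring)

lemma integrable_inv_solitonDenom (hc : 0 < c) (hk : k ≠ 0) :
    Integrable fun z => (solitonDenom c k z)⁻¹ := by
  refine ((integrable_inv_one_add_sq.comp_mul_left' hk).const_mul (4 / c)).mono'
    ((continuous_solitonDenom c k).inv₀
      fun z => (solitonDenom_pos hc.le z).ne').aestronglyMeasurable
    (ae_of_all _ fun z => ?_)
  have hD := solitonDenom_pos (k := k) hc.le z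
  have hcosh := one_add_sq_le_four_mul_cosh (k * z)
  have hlow : c / 4 * (1 + (k * z) ^ 2) ≤ solitonDenom c k z := by
    unfold solitonDenom; nlinarith
  calc ‖(solitonDenom c k z)⁻¹‖ = (solitonDenom c k z)⁻¹ := Real.norm_of_nonneg (inv_pos.2 hD).le
    _ ≤ (c / 4 * (1 + (k * z) ^ 2))⁻¹ := inv_anti₀ (by positivity) hlow
    _ = 4 / c * (1 + (k * z) ^ 2)⁻¹ := by rw [mul_inv, inv_div]

lemma abs_solitonLogDeriv_le (hc : 0 ≤ c) (z : ℝ) : |solitonLogDeriv c k z| ≤ |k| / 2 := by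
  have hD := solitonDenom_pos (k := k) hc z
  have hsinh : |sinh (k * z)| ≤ cosh (k * z) := by
    rw [abs_le, sinh_eq, cosh_eq]
    constructor <;> linarith [exp_pos (k * z), exp_pos (-(k * z))]
  have hcs : c * |sinh (k * z)| ≤ solitonDenom c k z := by
    unfold solitonDenom; nlinarith
  rw [solitonLogDeriv, abs_div, abs_neg, abs_mul, abs_mul, abs_of_nonneg hc,
    abs_of_pos (by positivity : 0 < 2 * solitonDenom c k z), div_le_iff₀ (by positivity)]
  nlinarith [abs_nonneg k]

lemma hasDerivAt_solitonLogDeriv (hc : 0 ≤ c) (z : ℝ) :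
    HasDerivAt (solitonLogDeriv c k)
      (k ^ 2 / 4 * (1 - 4 / solitonDenom c k z + 3 * (1 - c ^ 2) / solitonDenom c k z ^ 2)
        - solitonLogDeriv c k z ^ 2) z := by
  have hD := (solitonDenom_pos (k := k) hc z).ne'
  have hnum : HasDerivAt (fun y => -(c * k * sinh (k * y))) (-(c * k * (cosh (k * z) * k))) z :=
    (((hasDerivAt_id z).const_mul k).sinh.const_mul (c * k)).neg.congr_deriv (by simp)
  refine (hnum.div ((hasDerivAt_solitonDenom c k z).const_mul 2)
    (mul_ne_zero two_ne_zero hD)).congr_deriv ?_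
  have hsq : cosh (k * z) ^ 2 = 1 + sinh (k * z) ^ 2 := cosh_sq' _
  unfold solitonLogDeriv
  unfold solitonDenom at hD ⊢
  field_simp
  linear_combination (-12 * c ^ 2 * k ^ 2) * hsq

lemma solitonProfile_sq (ha : 0 ≤ a) (hc : 0 ≤ c) (z : ℝ) :
    solitonProfile a c k z ^ 2 = a / solitonDenom c k z :=
  sq_sqrt (div_nonneg ha (solitonDenom_pos hc z).le)

lemma solitonProfile_le (ha : 0 ≤ a) (hc : 0 ≤ c) (z : ℝ) : solitonProfile a c k z ≤ √a :=
  sqrt_le_sqrt (div_le_self ha (one_le_solitonDenom hc z))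

lemma continuous_solitonProfile (hc : 0 ≤ c) (a k : ℝ) : Continuous (solitonProfile a c k) :=
  (continuous_const.div (continuous_solitonDenom c k)
    fun z => (solitonDenom_pos hc z).ne').sqrt

lemma continuous_solitonLogDeriv (hc : 0 ≤ c) (k : ℝ) : Continuous (solitonLogDeriv c k) := by
  unfold solitonLogDeriv
  exact Continuous.div (by fun_prop) (continuous_const.mul (continuous_solitonDenom c k))
    fun z => (mul_pos two_pos (solitonDenom_pos hc z)).ne'

lemma hasDerivAt_solitonProfile (ha : 0 < a) (hc : 0 ≤ c) (z : ℝ) :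
    HasDerivAt (solitonProfile a c k) (solitonLogDeriv c k z * solitonProfile a c k z) z := by
  have hD := solitonDenom_pos (k := k) hc z
  have hquot : HasDerivAt (fun y => a / solitonDenom c k y)
      ((0 * solitonDenom c k z - a * (c * k * sinh (k * z))) / solitonDenom c k z ^ 2) z :=
    (hasDerivAt_const z a).div (hasDerivAt_solitonDenom c k z) hD.ne'
  refine (hquot.sqrt (by positivity)).congr_deriv ?_
  have hR := solitonProfile_sq (k := k) ha.le hc z
  unfold solitonProfile solitonLogDeriv at *
  field_simp
  rw [hR]
  field_simp
  ring

lemma deriv_solitonProfile (ha : 0 < a) (hc : 0 ≤ c) :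
    deriv (solitonProfile a c k) = fun z => solitonLogDeriv c k z * solitonProfile a c k z :=
  funext fun z => (hasDerivAt_solitonProfile ha hc z).deriv

lemma hasDerivAt_deriv_solitonProfile (ha : 0 < a) (hc : 0 ≤ c) (z : ℝ) :
    HasDerivAt (deriv (solitonProfile a c k))
      (k ^ 2 / 4 * (solitonProfile a c k z - 4 / a * solitonProfile a c k z ^ 3
        + 3 * (1 - c ^ 2) / a ^ 2 * solitonProfile a c k z ^ 5)) z := by
  rw [deriv_solitonProfile ha hc]
  refine ((hasDerivAt_solitonLogDeriv hc z).mul (hasDerivAt_solitonProfile ha hc z)).congr_deriv ?_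
  have hR := solitonProfile_sq (k := k) ha.le hc z
  set R := solitonProfile a c k z
  rw [show R ^ 3 = R ^ 2 * R by ring, show R ^ 5 = (R ^ 2) ^ 2 * R by ring, hR]
  field_simp
  ring

lemma integrable_solitonProfile_sq (ha : 0 ≤ a) (hc : 0 < c) (hk : k ≠ 0) :
    Integrable fun z => solitonProfile a c k z ^ 2 :=
  ((integrable_inv_solitonDenom hc hk).const_mul a).congr
    (ae_of_all _ fun z => by dsimp only; rw [solitonProfile_sq ha hc.le, div_eq_mul_inv])

lemma integrable_solitonProfile_pow (ha : 0 ≤ a) (hc : 0 < c) (hk : k ≠ 0) {n : ℕ} (hn : 2 ≤ n) :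
    Integrable fun z => solitonProfile a c k z ^ n := by
  obtain ⟨m, rfl⟩ := Nat.exists_eq_add_of_le hn
  simp only [pow_add]
  refine (integrable_solitonProfile_sq ha hc hk).mul_bdd
    ((continuous_solitonProfile hc.le a k).pow m).aestronglyMeasurable
    (ae_of_all _ fun z => ?_) (c := √a ^ m)
  rw [norm_pow]
  exact pow_le_pow_left₀ (norm_nonneg _)
    ((Real.norm_of_nonneg (sqrt_nonneg _)).trans_le (solitonProfile_le ha hc.le z)) m

lemma integrable_solitonLogDeriv_pow_mul_solitonProfile_sq (ha : 0 ≤ a) (hc : 0 < c) (hk : k ≠ 0)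
    (n : ℕ) : Integrable fun z => solitonLogDeriv c k z ^ n * solitonProfile a c k z ^ 2 :=
  (integrable_solitonProfile_sq ha hc hk).bdd_mul (c := (|k| / 2) ^ n)
    ((continuous_solitonLogDeriv hc.le k).pow n).aestronglyMeasurable
    (ae_of_all _ fun z => by
      rw [norm_pow, Real.norm_eq_abs]
      exact pow_le_pow_left₀ (abs_nonneg _) (abs_solitonLogDeriv_le hc.le z) n)

theorem integral_deriv_solitonProfile_sq (ha : 0 < a) (hc : 0 < c) (hk : k ≠ 0) :
    ∫ z, deriv (solitonProfile a c k) z ^ 2 =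
      -(k ^ 2 / 4) * (∫ z, solitonProfile a c k z ^ 2)
        + k ^ 2 / a * (∫ z, solitonProfile a c k z ^ 4)
        - 3 * k ^ 2 * (1 - c ^ 2) / (4 * a ^ 2) * ∫ z, solitonProfile a c k z ^ 6 := by
  have hR' := deriv_solitonProfile (k := k) ha hc.le
  have hprod (z : ℝ) :
      HasDerivAt (fun z => solitonProfile a c k z * deriv (solitonProfile a c k) z)
        (deriv (solitonProfile a c k) z ^ 2 + k ^ 2 / 4 * solitonProfile a c k z ^ 2
          - k ^ 2 / a * solitonProfile a c k z ^ 4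
          + 3 * k ^ 2 * (1 - c ^ 2) / (4 * a ^ 2) * solitonProfile a c k z ^ 6) z :=
    ((hasDerivAt_solitonProfile ha hc.le z).mul (hasDerivAt_deriv_solitonProfile ha hc.le z)
      ).congr_deriv (by rw [hR']; ring)
  have hI' : Integrable fun z => deriv (solitonProfile a c k) z ^ 2 := by
    simpa only [hR', mul_pow] using
      integrable_solitonLogDeriv_pow_mul_solitonProfile_sq ha.le hc hk 2
  have hI2 := (integrable_solitonProfile_sq ha.le hc hk).const_mul (k ^ 2 / 4)
  have hI4 := (integrable_solitonProfile_pow ha.le hc hk (n := 4) (by norm_num)).const_mul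
    (k ^ 2 / a)
  have hI6 := (integrable_solitonProfile_pow ha.le hc hk (n := 6) (by norm_num)).const_mul
    (3 * k ^ 2 * (1 - c ^ 2) / (4 * a ^ 2))
  have hRR' : Integrable fun z => solitonProfile a c k z * deriv (solitonProfile a c k) z := by
    simpa only [hR', pow_one, sq, mul_assoc, mul_comm, mul_left_comm] using
      integrable_solitonLogDeriv_pow_mul_solitonProfile_sq ha.le hc hk 1
  have hzero := integral_eq_zero_of_hasDerivAt_of_integrable hprod
    (((hI'.add hI2).sub hI4).add hI6) hRR'
  rw [integral_add (by fun_prop) hI6, integral_sub (by fun_prop) hI4,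
    integral_add hI' hI2, integral_const_mul, integral_const_mul, integral_const_mul] at hzero
  linarith

end

theorem stmt2_general (ω α β : ℝ) (hω : 0 < ω) (hβ : β = -(16 / 3) * α * ω)
    (hβ1 : β < 1)
    (R0 : ℝ → ℝ)
    (hR0 : ∀ z : ℝ, R0 z =
      Real.sqrt (4 * ω / (1 + Real.sqrt (1 - β) * Real.cosh (2 * Real.sqrt ω * z)))) :
    (∫ s : ℝ, (deriv R0 s) ^ 2) =
      -ω * (∫ s : ℝ, (R0 s) ^ 2) + (∫ s : ℝ, (R0 s) ^ 4) + α * ∫ s : ℝ, (R0 s) ^ 6 := by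
  obtain rfl : R0 = solitonProfile (4 * ω) √(1 - β) (2 * √ω) := funext hR0
  rw [integral_deriv_solitonProfile_sq (by positivity) (sqrt_pos.2 (by linarith)) (by positivity),
    mul_pow, sq_sqrt hω.le, sq_sqrt (by linarith), hβ]
  field_simp
  ring

/-- `Λ₂' = -ω Λ₂ + Λ₄ + α Λ₆`, i.e.
`∫ R₀'² = -ω ∫ R₀² + ∫ R₀⁴ + α ∫ R₀⁶`. -/
theorem stmt2 (ω α β : ℝ) (hω : 0 < ω) (hβ : β = -(16 / 3) * α * ω)
    (hβ0 : 0 ≤ β) (hβ1 : β < 1)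
    (R0 : ℝ → ℝ)
    (hR0 : ∀ z : ℝ, R0 z =
      Real.sqrt (4 * ω / (1 + Real.sqrt (1 - β) * Real.cosh (2 * Real.sqrt ω * z)))) :
    (∫ s : ℝ, (deriv R0 s) ^ 2) =
      -ω * (∫ s : ℝ, (R0 s) ^ 2) + (∫ s : ℝ, (R0 s) ^ 4) + α * ∫ s : ℝ, (R0 s) ^ 6 :=
  stmt2_general ω α β hω hβ hβ1 R0 hR0
end

section
/- The identity $\Lambda_2' - \omega\Lambda_2 + \frac{1}{2}\Lambda_4 + \frac{1}{3}\alpha\Lambda_6 = 0$ holds. -/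
/-!
Squaring removes the root: `R₀² = u := A / d` with `d = 1 + c cosh (k z)`, `A = 4ω`,
`c = √(1 - β)`, `k = 2√ω`. Since `c² sinh² (k z) = (d - 1)² - c²`, the quantity
`(R₀')² = u'² / (4u)` is a cubic polynomial in `u` (a first integral of the profile equation),
and for these parameters it is `ω R₀² - R₀⁴ / 2 - α R₀⁶ / 3`. Integrating this pointwise identity
gives the claim; every power of `u` is integrable because `u` is even and `u ≤ (2A/c) e^{-kz}`.
-/

open MeasureTheory Real

lemma MeasureTheory.Integrable.pow_succ_of_abs_le {α : Type*} [MeasurableSpace α]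
    {μ : Measure α} {f : α → ℝ} {M : ℝ} (hf : Integrable f μ) (hM : ∀ x, |f x| ≤ M) (n : ℕ) :
    Integrable (fun x => f x ^ (n + 1)) μ := by
  simp_rw [pow_succ]
  refine hf.bdd_mul (c := M ^ n) (hf.aestronglyMeasurable.pow n) (.of_forall fun x => ?_)
  rw [norm_pow, Real.norm_eq_abs]
  exact pow_le_pow_left₀ (abs_nonneg _) (hM x) n

noncomputable def coshProfile (A c k z : ℝ) : ℝ := A / (1 + c * cosh (k * z))

section coshProfile

variable {A c k : ℝ}

lemma one_le_one_add_mul_cosh (hc : 0 ≤ c) (x : ℝ) : 1 ≤ 1 + c * cosh x := by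
  have := mul_nonneg hc (cosh_pos x).le
  linarith

lemma coshProfile_pos (hA : 0 < A) (hc : 0 ≤ c) (z : ℝ) : 0 < coshProfile A c k z :=
  div_pos hA (one_pos.trans_le (one_le_one_add_mul_cosh hc _))

lemma coshProfile_nonneg (hA : 0 ≤ A) (hc : 0 ≤ c) (z : ℝ) : 0 ≤ coshProfile A c k z :=
  div_nonneg hA (zero_le_one.trans (one_le_one_add_mul_cosh hc _))

lemma coshProfile_le (hA : 0 ≤ A) (hc : 0 ≤ c) (z : ℝ) : coshProfile A c k z ≤ A :=
  div_le_self hA (one_le_one_add_mul_cosh hc _)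

lemma coshProfile_neg (z : ℝ) : coshProfile A c k (-z) = coshProfile A c k z := by
  simp only [coshProfile, mul_neg, cosh_neg]

lemma continuous_coshProfile (hc : 0 ≤ c) : Continuous (coshProfile A c k) :=
  continuous_const.div (by fun_prop) fun z => (one_pos.trans_le (one_le_one_add_mul_cosh hc _)).ne'

lemma coshProfile_le_mul_exp (hA : 0 ≤ A) (hc : 0 < c) (z : ℝ) :
    coshProfile A c k z ≤ 2 * A / c * exp (-k * z) := by
  have hd : c * (exp (k * z) / 2) ≤ 1 + c * cosh (k * z) := by
    have := mul_pos hc (exp_pos (-(k * z)))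
    rw [cosh_eq]
    linarith
  calc coshProfile A c k z ≤ A / (c * (exp (k * z) / 2)) :=
        div_le_div_of_nonneg_left hA (by positivity) hd
    _ = 2 * A / c * exp (-k * z) := by
        rw [neg_mul, exp_neg]
        field_simp

lemma integrable_coshProfile (hA : 0 ≤ A) (hc : 0 < c) (hk : 0 < k) :
    Integrable (coshProfile A c k) := by
  refine (continuous_coshProfile hc.le).locallyIntegrable
    |>.integrable_of_isBigO_atTop_of_norm_isNegInvariant
      (.of_forall fun z => by simp [coshProfile_neg]) (g := fun z => exp (-k * z)) ?_
      ⟨Set.Ioi 0, Filter.Ioi_mem_atTop 0, integrableOn_exp_mul_Ioi (neg_neg_of_pos hk) 0⟩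
  refine Asymptotics.IsBigO.of_bound (2 * A / c) (.of_forall fun z => ?_)
  rw [norm_of_nonneg (coshProfile_nonneg hA hc.le z), norm_of_nonneg (exp_pos _).le]
  exact coshProfile_le_mul_exp hA hc z

lemma integrable_coshProfile_pow (hA : 0 ≤ A) (hc : 0 < c) (hk : 0 < k) (n : ℕ) :
    Integrable (fun z => coshProfile A c k z ^ (n + 1)) :=
  (integrable_coshProfile hA hc hk).pow_succ_of_abs_le (fun z => by
    rw [abs_of_nonneg (coshProfile_nonneg hA hc.le z)]
    exact coshProfile_le hA hc.le z) n

lemma hasDerivAt_coshProfile (hc : 0 ≤ c) (z : ℝ) :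
    HasDerivAt (coshProfile A c k)
      (-(A * (c * (sinh (k * z) * k))) / (1 + c * cosh (k * z)) ^ 2) z := by
  have hd : HasDerivAt (fun z => 1 + c * cosh (k * z)) (c * (sinh (k * z) * k)) z :=
    (((hasDerivAt_id z).const_mul k).cosh.const_mul c).const_add 1 |>.congr_deriv (by simp)
  exact ((hasDerivAt_const z A).fun_div hd
    (one_pos.trans_le (one_le_one_add_mul_cosh hc _)).ne').congr_deriv (by ring)

lemma deriv_sqrt_coshProfile_sq (hA : 0 < A) (hc : 0 ≤ c) (z : ℝ) :
    deriv (fun z => √(coshProfile A c k z)) z ^ 2 =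
      k ^ 2 / 4 * coshProfile A c k z - k ^ 2 / (2 * A) * coshProfile A c k z ^ 2
        + k ^ 2 * (1 - c ^ 2) / (4 * A ^ 2) * coshProfile A c k z ^ 3 := by
  have hu := coshProfile_pos hA hc (k := k) z
  rw [((hasDerivAt_coshProfile hc z).sqrt hu.ne').deriv, div_pow, mul_pow, sq_sqrt hu.le]
  have hd := one_pos.trans_le (one_le_one_add_mul_cosh hc (k * z))
  have hsinh : (-(A * (c * (sinh (k * z) * k)))) ^ 2 =
      A ^ 2 * c ^ 2 * k ^ 2 * (cosh (k * z) ^ 2 - 1) := by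
    rw [cosh_sq]; ring
  simp only [coshProfile] at hu ⊢
  rw [div_pow, hsinh]
  field_simp
  ring

lemma integral_deriv_sqrt_coshProfile_sq (hA : 0 < A) (hc : 0 < c) (hk : 0 < k) :
    ∫ z, deriv (fun z => √(coshProfile A c k z)) z ^ 2 =
      k ^ 2 / 4 * (∫ z, coshProfile A c k z) - k ^ 2 / (2 * A) * (∫ z, coshProfile A c k z ^ 2)
        + k ^ 2 * (1 - c ^ 2) / (4 * A ^ 2) * (∫ z, coshProfile A c k z ^ 3) := by
  have h1 := integrable_coshProfile hA.le hc hk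
  have h2 := integrable_coshProfile_pow hA.le hc hk 1
  have h3 := integrable_coshProfile_pow hA.le hc hk 2
  simp only [deriv_sqrt_coshProfile_sq hA hc.le]
  rw [integral_add (f := fun z => k ^ 2 / 4 * coshProfile A c k z
      - k ^ 2 / (2 * A) * coshProfile A c k z ^ 2)
      ((h1.const_mul _).sub (h2.const_mul _)) (h3.const_mul _),
    integral_sub (h1.const_mul _) (h2.const_mul _)]
  simp only [integral_const_mul]

end coshProfile

theorem stmt3_general (ω α β : ℝ) (hω : 0 < ω) (hβ : β = -(16 / 3) * α * ω)
    (hβ1 : β < 1)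
    (R0 : ℝ → ℝ)
    (hR0 : ∀ z : ℝ, R0 z =
      Real.sqrt (4 * ω / (1 + Real.sqrt (1 - β) * Real.cosh (2 * Real.sqrt ω * z)))) :
    (∫ s : ℝ, (deriv R0 s) ^ 2) - ω * (∫ s : ℝ, (R0 s) ^ 2)
      + (1 / 2) * (∫ s : ℝ, (R0 s) ^ 4) + (1 / 3) * α * (∫ s : ℝ, (R0 s) ^ 6) = 0 := by
  have hA : 0 < 4 * ω := by positivity
  have hc : 0 < √(1 - β) := sqrt_pos.mpr (by linarith)
  have hsq : ∀ z, √(coshProfile (4 * ω) √(1 - β) (2 * √ω) z) ^ 2 =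
      coshProfile (4 * ω) √(1 - β) (2 * √ω) z := fun z =>
    sq_sqrt (coshProfile_pos hA hc.le z).le
  have hR0' : R0 = fun z => √(coshProfile (4 * ω) √(1 - β) (2 * √ω) z) := funext hR0
  simp only [hR0', show ∀ x : ℝ, x ^ 4 = (x ^ 2) ^ 2 by intro; ring,
    show ∀ x : ℝ, x ^ 6 = (x ^ 2) ^ 3 by intro; ring, hsq]
  rw [integral_deriv_sqrt_coshProfile_sq hA hc (by positivity), mul_pow, sq_sqrt hω.le,
    sq_sqrt (by linarith), hβ]
  field_simp
  ring

/-- `Λ₂' - ω Λ₂ + (1/2) Λ₄ + (1/3) α Λ₆ = 0`. -/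
theorem stmt3 (ω α β : ℝ) (hω : 0 < ω) (hβ : β = -(16 / 3) * α * ω)
    (hβ0 : 0 ≤ β) (hβ1 : β < 1)
    (R0 : ℝ → ℝ)
    (hR0 : ∀ z : ℝ, R0 z =
      Real.sqrt (4 * ω / (1 + Real.sqrt (1 - β) * Real.cosh (2 * Real.sqrt ω * z)))) :
    (∫ s : ℝ, (deriv R0 s) ^ 2) - ω * (∫ s : ℝ, (R0 s) ^ 2)
      + (1 / 2) * (∫ s : ℝ, (R0 s) ^ 4) + (1 / 3) * α * (∫ s : ℝ, (R0 s) ^ 6) = 0 :=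
  stmt3_general ω α β hω hβ hβ1 R0 hR0
end

section
/- For every integer $n \ge 1$, the quantity $a_n - b_n$ is strictly negative, where $a_n = \sum_{j=0}^{n} \frac{j}{(2j+1)(2(n-j)+3)}$ and $b_n = \sum_{j=0}^{n} \frac{j}{(2j+3)(2(n-j)+1)}$. -/
/-- For every integer `n ≥ 1`, `aₙ - bₙ < 0`, where
`aₙ = ∑_{j=0}^n j/((2j+1)(2(n-j)+3))` and `bₙ = ∑_{j=0}^n j/((2j+3)(2(n-j)+1))`. -/
theorem stmt11 (n : ℕ) (hn : 1 ≤ n) :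
    (∑ j ∈ Finset.range (n + 1), (j : ℝ) / (2 * j + 1) * (1 / (2 * ((n : ℝ) - j) + 3)))
      - (∑ j ∈ Finset.range (n + 1),
          (j : ℝ) / (2 * j + 3) * (1 / (2 * ((n : ℝ) - j) + 1))) < 0 := by
  set g : ℕ → ℝ := fun j => (j : ℝ) / (2 * j + 1) * (1 / (2 * ((n : ℝ) - j) + 3))
      - (j : ℝ) / (2 * j + 3) * (1 / (2 * ((n : ℝ) - j) + 1)) with hg
  set f : ℕ → ℝ := fun j => -(4 * ((n : ℝ) - 2 * j) ^ 2) /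
      (((2 * (j : ℝ) + 1) * (2 * ((n : ℝ) - j) + 3)) *
        ((2 * ((n : ℝ) - j) + 1) * (2 * (j : ℝ) + 3))) with hf
  rw [← Finset.sum_sub_distrib]
  have hrefl : (∑ j ∈ Finset.range (n + 1), g (n - j)) = ∑ j ∈ Finset.range (n + 1), g j := by
    have := Finset.sum_range_reflect g (n + 1)
    simpa using this
  have key : (∑ j ∈ Finset.range (n + 1), g j) * 2 = ∑ j ∈ Finset.range (n + 1), f j := by
    calc (∑ j ∈ Finset.range (n + 1), g j) * 2
        = (∑ j ∈ Finset.range (n + 1), g j) + (∑ j ∈ Finset.range (n + 1), g (n - j)) := by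
          rw [hrefl]; ring
      _ = ∑ j ∈ Finset.range (n + 1), (g j + g (n - j)) := (Finset.sum_add_distrib).symm
      _ = ∑ j ∈ Finset.range (n + 1), f j := by
          refine Finset.sum_congr rfl fun j hj => ?_
          have hjn : j ≤ n := Finset.mem_range_succ_iff.mp hj
          have hc : ((n - j : ℕ) : ℝ) = (n : ℝ) - j := by
            push_cast [Nat.cast_sub hjn]; ring
          have hxn : (j : ℝ) ≤ n := by exact_mod_cast hjn
          have hx : (0 : ℝ) ≤ j := Nat.cast_nonneg j
          have h1 : (2 * (j : ℝ) + 1) ≠ 0 := by positivity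
          have h3 : (2 * (j : ℝ) + 3) ≠ 0 := by positivity
          have h2 : (2 * ((n : ℝ) - j) + 3) ≠ 0 := by nlinarith
          have h4 : (2 * ((n : ℝ) - j) + 1) ≠ 0 := by nlinarith
          simp only [hg, hf, hc]
          rw [show (n : ℝ) - ((n : ℝ) - (j : ℝ)) = (j : ℝ) from by ring]
          field_simp
          ring
  have hlt : (∑ j ∈ Finset.range (n + 1), f j) < 0 := by
    have h0 : (0 : ℝ) = ∑ _j ∈ Finset.range (n + 1), (0 : ℝ) := by simp
    rw [h0]
    refine Finset.sum_lt_sum (fun j hj => ?_) ⟨0, Finset.mem_range.mpr (Nat.succ_pos n), ?_⟩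
    · have hjn : j ≤ n := Finset.mem_range_succ_iff.mp hj
      have hxn : (j : ℝ) ≤ n := by exact_mod_cast hjn
      have hx : (0 : ℝ) ≤ j := Nat.cast_nonneg j
      have hd : (0 : ℝ) < ((2 * (j : ℝ) + 1) * (2 * ((n : ℝ) - j) + 3)) *
          ((2 * ((n : ℝ) - j) + 1) * (2 * (j : ℝ) + 3)) := by
        have : (0:ℝ) ≤ (n : ℝ) - j := by linarith
        positivity
      simp only [hf]
      exact div_nonpos_of_nonpos_of_nonneg (by nlinarith [sq_nonneg ((n:ℝ) - 2*j)]) hd.le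
    · have hn1 : (1 : ℝ) ≤ n := by exact_mod_cast hn
      simp only [hf]
      push_cast
      have hd : (0 : ℝ) < ((2 * (0:ℝ) + 1) * (2 * ((n : ℝ) - 0) + 3)) *
          ((2 * ((n : ℝ) - 0) + 1) * (2 * (0:ℝ) + 3)) := by nlinarith
      refine div_neg_of_neg_of_pos ?_ hd
      nlinarith
  linarith [key]
end

section
/- For every real $n > 0$, $\int_0^n x\,g(x,n)\,dx < 0$, where $g(x,n) = \frac{n-2x}{f(x,n)}$ and $f(x,n) = (2x+1)(2(n-x)+1)(2x+3)(2(n-x)+3)$. (This follows because under the substitution $y = x - n/2$ the function $g$ is odd in $y$ with $y\,g < 0$ for $y \ne 0$.) -/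
/-!
Reflecting `x ↦ a + b - x` turns `∫ x g` into `-∫ (a + b - x) g` whenever `g` is odd about the
midpoint, so `∫ x g = -½ ∫ (a + b - 2x) g`. For `g = (n - 2x) / f` with `f > 0` the last integrand
is `(n - 2x)² / f`, which is nonnegative and not identically zero.
-/

open MeasureTheory intervalIntegral

section Antisymmetric

variable {g : ℝ → ℝ} {a b : ℝ}

theorem integral_mul_eq_neg_integral_of_antisymm (hg : ∀ x, g (a + b - x) = -g x) :
    ∫ x in a..b, x * g x = -∫ x in a..b, (a + b - x) * g x := by
  calc ∫ x in a..b, x * g x = ∫ x in a..b, (a + b - x) * g (a + b - x) := by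
        rw [integral_comp_sub_left (fun x => x * g x)]
        simp
    _ = -∫ x in a..b, (a + b - x) * g x := by simp [hg, intervalIntegral.integral_neg]

theorem integral_mul_eq_neg_half_integral_of_antisymm (hg : ∀ x, g (a + b - x) = -g x)
    (hint : IntervalIntegrable g volume a b) :
    ∫ x in a..b, x * g x = -(1 / 2) * ∫ x in a..b, (a + b - 2 * x) * g x := by
  have hx : IntervalIntegrable (fun x => x * g x) volume a b :=
    hint.continuousOn_mul continuousOn_id
  have hx' : IntervalIntegrable (fun x => (a + b - x) * g x) volume a b :=
    hint.continuousOn_mul (by fun_prop)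
  have hsplit : ∫ x in a..b, (a + b - 2 * x) * g x
      = (∫ x in a..b, (a + b - x) * g x) - ∫ x in a..b, x * g x := by
    rw [← integral_sub hx' hx]
    congr 1 with x
    ring
  rw [hsplit, integral_mul_eq_neg_integral_of_antisymm hg]
  ring

end Antisymmetric

-- The paper's `f(x, n)` and `g(x, n)`.
def quarticWeight (n x : ℝ) : ℝ := (2 * x + 1) * (2 * (n - x) + 1) * (2 * x + 3) * (2 * (n - x) + 3)

noncomputable def skewQuotient (n x : ℝ) : ℝ := (n - 2 * x) / quarticWeight n x

section Quotient

variable {n x : ℝ}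

theorem quarticWeight_pos (hx : -(1 / 2) < x) (hxn : x < n + 1 / 2) : 0 < quarticWeight n x := by
  unfold quarticWeight
  have h₁ : 0 < 2 * x + 1 := by linarith
  have h₂ : 0 < 2 * (n - x) + 1 := by linarith
  exact mul_pos (mul_pos (mul_pos h₁ h₂) (by linarith)) (by linarith)

theorem quarticWeight_sub_left : quarticWeight n (n - x) = quarticWeight n x := by
  unfold quarticWeight
  ring

theorem skewQuotient_sub_left : skewQuotient n (n - x) = -skewQuotient n x := by
  rw [skewQuotient, skewQuotient, quarticWeight_sub_left, ← neg_div]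
  ring_nf

theorem mul_skewQuotient_nonneg (hx : -(1 / 2) < x) (hxn : x < n + 1 / 2) :
    0 ≤ (n - 2 * x) * skewQuotient n x := by
  rw [skewQuotient, ← mul_div_assoc]
  exact div_nonneg (mul_self_nonneg _) (quarticWeight_pos hx hxn).le

theorem continuousOn_skewQuotient : ContinuousOn (skewQuotient n) (Set.Icc 0 n) :=
  ContinuousOn.div (by fun_prop) (by unfold quarticWeight; fun_prop)
    fun _ hx => (quarticWeight_pos (by linarith [hx.1]) (by linarith [hx.2])).ne'

end Quotient

/-- For every real `n > 0`, `∫_0^n x g(x,n) dx < 0`, where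
`g(x,n) = (n-2x)/f(x,n)` and `f(x,n) = (2x+1)(2(n-x)+1)(2x+3)(2(n-x)+3)`. -/
theorem stmt13 (n : ℝ) (hn : 0 < n) :
    (∫ x in (0 : ℝ)..n,
      x * ((n - 2 * x) /
        ((2 * x + 1) * (2 * (n - x) + 1) * (2 * x + 3) * (2 * (n - x) + 3)))) < 0 := by
  change ∫ x in (0 : ℝ)..n, x * skewQuotient n x < 0
  have hanti : ∀ x, skewQuotient n (0 + n - x) = -skewQuotient n x := fun x => by
    rw [zero_add, skewQuotient_sub_left]
  rw [integral_mul_eq_neg_half_integral_of_antisymm hanti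
    (continuousOn_skewQuotient.intervalIntegrable_of_Icc hn.le)]
  have hpos : 0 < ∫ x in (0 : ℝ)..n, (0 + n - 2 * x) * skewQuotient n x := by
    simp only [zero_add]
    refine integral_pos hn (continuousOn_const.sub (by fun_prop) |>.mul continuousOn_skewQuotient)
      (fun x hx => mul_skewQuotient_nonneg (by linarith [hx.1]) (by linarith [hx.2])) ⟨0, ?_, ?_⟩
    · exact ⟨le_rfl, hn.le⟩
    · rw [skewQuotient, ← mul_div_assoc]
      exact div_pos (by nlinarith) (quarticWeight_pos (by norm_num) (by linarith))
  linarith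
end

section
/- Suppose $\phi : \mathbb{R} \to \mathbb{R}$ is differentiable, satisfies $\phi'(z) = -2S_0(z)\phi(z) - S_0(z)$ for all $z$, where $S_0 = R_0'/R_0$, and $\phi$ is bounded on $(-\infty, 0]$. Then $\phi(z) = -\frac{1}{2}$ for all $z \in \mathbb{R}$. -/
/-- If `φ : ℝ → ℝ` is differentiable, satisfies
`φ' = -2 S₀ φ - S₀` with `S₀ = R₀'/R₀`, and is bounded on `(-∞, 0]`,
then `φ ≡ -1/2`. -/
theorem stmt14 (ω α β : ℝ) (hω : 0 < ω) (hβ : β = -(16 / 3) * α * ω)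
    (hβ0 : 0 ≤ β) (hβ1 : β < 1)
    (R0 : ℝ → ℝ)
    (hR0 : ∀ z : ℝ, R0 z =
      Real.sqrt (4 * ω / (1 + Real.sqrt (1 - β) * Real.cosh (2 * Real.sqrt ω * z))))
    (S0 : ℝ → ℝ) (hS0 : ∀ z : ℝ, S0 z = deriv R0 z / R0 z)
    (φ : ℝ → ℝ) (hφ : Differentiable ℝ φ)
    (hode : ∀ z : ℝ, deriv φ z = -2 * S0 z * φ z - S0 z)
    (hbdd : ∃ C : ℝ, ∀ z : ℝ, z ≤ 0 → |φ z| ≤ C) :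
    ∀ z : ℝ, φ z = -(1 / 2) := by
  set s := Real.sqrt (1 - β) with hs_def
  have hs : 0 < s := Real.sqrt_pos.mpr (by linarith)
  set D : ℝ → ℝ := fun z => 1 + s * Real.cosh (2 * Real.sqrt ω * z) with hD_def
  have hD1 : ∀ z, 1 ≤ D z := by
    intro z
    have h1 := Real.one_le_cosh (2 * Real.sqrt ω * z)
    simp only [hD_def]
    nlinarith
  have hDpos : ∀ z, 0 < D z := fun z => lt_of_lt_of_le one_pos (hD1 z)
  have hargpos : ∀ z, 0 < 4 * ω / D z := fun z => div_pos (by linarith) (hDpos z)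
  have hR0sq : ∀ z, R0 z ^ 2 = 4 * ω / D z := by
    intro z
    rw [hR0 z]
    exact Real.sq_sqrt (hargpos z).le
  have hR0pos : ∀ z, 0 < R0 z := by
    intro z
    rw [hR0 z]
    exact Real.sqrt_pos.mpr (hargpos z)
  have hR0ne : ∀ z, R0 z ≠ 0 := fun z => (hR0pos z).ne'
  have hDdiff : Differentiable ℝ D := by
    apply (differentiable_const _).add
    exact (differentiable_const _).mul (Real.differentiable_cosh.comp
      ((differentiable_const _).mul differentiable_id))
  have hR0fun : R0 = fun z => Real.sqrt (4 * ω / D z) := funext hR0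
  have hR0diff : Differentiable ℝ R0 := by
    rw [hR0fun]
    intro z
    exact ((differentiableAt_const _).div (hDdiff z) (hDpos z).ne').sqrt (hargpos z).ne'
  set ψ : ℝ → ℝ := fun z => φ z + 1 / 2 with hψ_def
  set g : ℝ → ℝ := fun z => R0 z ^ 2 * ψ z with hg_def
  have hgdiff : Differentiable ℝ g := (hR0diff.pow 2).mul (hφ.add_const _)
  have hgderiv : ∀ z, deriv g z = 0 := by
    intro z
    have h2 : HasDerivAt (fun z => R0 z ^ 2)
        ((2 : ℕ) * R0 z ^ (2 - 1) * deriv R0 z) z :=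
      ((hR0diff z).hasDerivAt).pow 2
    have h3 : HasDerivAt ψ (deriv φ z) z := ((hφ z).hasDerivAt).add_const _
    have hg' : HasDerivAt g
        ((2 : ℕ) * R0 z ^ (2 - 1) * deriv R0 z * ψ z + R0 z ^ 2 * deriv φ z) z :=
      h2.mul h3
    rw [hg'.deriv, hode z, hS0 z]
    have hne := hR0ne z
    field_simp
    ring
  have hconst : ∀ z, g z = g 0 := fun z => is_const_of_deriv_eq_zero hgdiff hgderiv z 0
  -- show g 0 = 0
  obtain ⟨C, hC⟩ := hbdd
  have hC0 : 0 ≤ C := le_trans (abs_nonneg _) (hC 0 le_rfl)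
  have hg0 : g 0 = 0 := by
    by_contra hc
    have hcpos : 0 < |g 0| := abs_pos.mpr hc
    set B : ℝ := 4 * ω * (C + 1 / 2) / |g 0| with hB_def
    have hBpos : 0 < B := by positivity
    -- for all z ≤ 0, D z ≤ B
    have hDle : ∀ z, z ≤ 0 → D z ≤ B := by
      intro z hz
      have h1 : |g 0| = R0 z ^ 2 * |ψ z| := by
        rw [← hconst z, hg_def]
        rw [abs_mul, abs_of_nonneg (by positivity : (0:ℝ) ≤ R0 z ^ 2)]
      have h2 : |ψ z| ≤ C + 1 / 2 := by
        have := hC z hz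
        calc |ψ z| ≤ |φ z| + |(1:ℝ)/2| := abs_add_le _ _
          _ ≤ C + 1 / 2 := by rw [abs_of_nonneg (by norm_num : (0:ℝ) ≤ 1/2)]; linarith
      have h3 : |g 0| ≤ (4 * ω / D z) * (C + 1 / 2) := by
        rw [h1, hR0sq z]
        apply mul_le_mul_of_nonneg_left h2 (hargpos z).le
      have hDz := hDpos z
      rw [hB_def, le_div_iff₀ hcpos]
      rw [div_mul_eq_mul_div, le_div_iff₀ hDz] at h3
      nlinarith
    -- construct z ≤ 0 with D z > B
    have hsω : 0 < Real.sqrt ω := Real.sqrt_pos.mpr hω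
    set T : ℝ := B / (s * Real.sqrt ω) with hT_def
    have hTpos : 0 < T := by positivity
    have hzle : -T ≤ 0 := by linarith
    have hcosh : Real.cosh (2 * Real.sqrt ω * (-T)) = Real.cosh (2 * Real.sqrt ω * T) := by
      rw [show 2 * Real.sqrt ω * (-T) = -(2 * Real.sqrt ω * T) by ring, Real.cosh_neg]
    have hcosh_lb : Real.sqrt ω * T ≤ Real.cosh (2 * Real.sqrt ω * T) := by
      have h1 : 2 * Real.sqrt ω * T + 1 ≤ Real.exp (2 * Real.sqrt ω * T) :=
        Real.add_one_le_exp _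
      have h2 : 0 < Real.exp (-(2 * Real.sqrt ω * T)) := Real.exp_pos _
      rw [Real.cosh_eq]
      nlinarith
    have hDgt : B < D (-T) := by
      have hsT : s * (Real.sqrt ω * T) = B := by
        rw [hT_def]
        field_simp
      have : s * Real.cosh (2 * Real.sqrt ω * (-T)) ≥ B := by
        rw [hcosh, ← hsT]
        exact mul_le_mul_of_nonneg_left hcosh_lb hs.le
      simp only [hD_def]
      linarith
    exact absurd (hDle (-T) hzle) (not_le.mpr hDgt)
  -- conclude
  intro z
  have h1 : g z = 0 := by rw [hconst z, hg0]
  have h2 : R0 z ^ 2 * ψ z = 0 := h1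
  have h3 : ψ z = 0 := by
    rcases mul_eq_zero.mp h2 with h | h
    · exact absurd h (pow_ne_zero 2 (hR0ne z))
    · exact h
  have : φ z + 1 / 2 = 0 := h3
  linarith
end
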